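/- arXiv:1501.03394 — 9 statements merged into one kernel-verified Lean document; each statement's English description precedes it below -/
import Mathlib

section
/- The m-th derivative of the Jacobi polynomial satisfies (d/dx)^m P_n^{(α,β)}(x) = 2^{−m} (n+α+β+1)_m · P_{n−m}^{(α+m,β+m)}(x) for 0 ≤ m ≤ n. -/
open Polynomial

/-- The Jacobi polynomial `P_n^{(α,β)}` as a real polynomial in `x`. -/
noncomputable def jacobiP (α β : ℝ) (n : ℕ) : Polynomial ℝ :=
  C ((ascPochhammer ℝ n).eval (α + 1) / (n.factorial : ℝ)) *
    ∑ k ∈ Finset.range (n + 1),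
      C ((ascPochhammer ℝ k).eval (-(n : ℝ)) * (ascPochhammer ℝ k).eval ((n : ℝ) + α + β + 1) /
          ((k.factorial : ℝ) * (ascPochhammer ℝ k).eval (α + 1))) *
        (C (1 / 2 : ℝ) * (1 - X)) ^ k

/-- `φ_n^{(α,β)}(μ) = Σ_{k=0}^{[n/2]} (d/dx)^{2k} P_n^{(α,β)}(x)|_{x=1} · μ^k`. -/
noncomputable def phi (α β : ℝ) (n : ℕ) : Polynomial ℝ :=
  ∑ k ∈ Finset.range (n / 2 + 1),
    C ((Polynomial.derivative^[2 * k] (jacobiP α β n)).eval 1) * X ^ k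

/-- All complex zeros of `p` are real (i.e. `p` splits over `ℝ`). -/
def RealRooted (p : Polynomial ℝ) : Prop := (p.roots.card : ℕ) = p.natDegree

/-- All zeros of `p` are real and simple. -/
def AllRealSimple (p : Polynomial ℝ) : Prop := RealRooted p ∧ p.roots.Nodup

/-- Zeros of `g` and `h` interlace strictly. -/
def StrictlyInterlacing (g h : Polynomial ℝ) : Prop :=
  AllRealSimple g ∧ AllRealSimple h ∧
  (∀ x : ℝ, ¬(g.IsRoot x ∧ h.IsRoot x)) ∧
  (∀ x y : ℝ, g.IsRoot x → g.IsRoot y → x < y →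
      (∀ t : ℝ, g.IsRoot t → ¬(x < t ∧ t < y)) →
      ∃! z : ℝ, h.IsRoot z ∧ x < z ∧ z < y) ∧
  (∀ x y : ℝ, h.IsRoot x → h.IsRoot y → x < y →
      (∀ t : ℝ, h.IsRoot t → ¬(x < t ∧ t < y)) →
      ∃! z : ℝ, g.IsRoot z ∧ x < z ∧ z < y)

/-- `(g,h)` is a real pair: every real combination has only real zeros.
This is equivalent to non-strict interlacing of the zeros. -/
def RealPair (g h : Polynomial ℝ) : Prop :=
  ∀ a b : ℝ, RealRooted (C a * g + C b * h)

/-- The zero of `p` closest to the origin, when all zeros of `p` are negative. -/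
noncomputable def maxRoot (p : Polynomial ℝ) : ℝ := sSup {x : ℝ | p.IsRoot x}

/-- `f` is Hurwitz stable: all complex zeros lie in the open left half-plane. -/
def HurwitzStable (f : Polynomial ℝ) : Prop :=
  ∀ z : ℂ, Polynomial.aeval z f = 0 → z.re < 0

lemma asc_succ_left_eval (n : ℕ) (x : ℝ) :
    (ascPochhammer ℝ (n+1)).eval x = x * (ascPochhammer ℝ n).eval (x+1) := by
  rw [ascPochhammer_succ_left]
  simp [eval_comp]

lemma aux_merge (a b k h c a' b' : ℝ) (p : Polynomial ℝ) (i : ℕ)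
    (hs : a * (b * (k * -h)) = c * (a' * b')) :
    C a * (C b * (C k * p ^ i * (-C h))) = C c * (C a' * (C b' * p ^ i)) := by
  have h1 : C (a*(b*(k* -h))) * p^i = C a * (C b * (C k * p^i * (-C h))) := by
    simp only [map_mul, map_neg]; ring
  have h2 : C (c*(a'*b')) * p^i = C c * (C a' * (C b' * p^i)) := by
    simp only [map_mul]; ring
  rw [← h1, ← h2, hs]

lemma jacobi_deriv_one (α β : ℝ) (N : ℕ)
    (hα : ∀ k ≤ N + 1, (ascPochhammer ℝ k).eval (α + 1) ≠ 0) :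
    Polynomial.derivative (jacobiP α β (N+1)) =
      C ((1 / 2 : ℝ) * (((N:ℝ)+1) + α + β + 1)) * jacobiP (α + 1) (β + 1) N := by
  have hy : derivative (C (1/2:ℝ) * (1 - X)) = -C (1/2:ℝ) := by
    simp [derivative_sub]
  unfold jacobiP
  rw [derivative_C_mul, derivative_sum, Finset.sum_range_succ']
  simp only [pow_zero, mul_one, derivative_C, add_zero]
  rw [Finset.mul_sum, Finset.mul_sum, Finset.mul_sum]
  refine Finset.sum_congr rfl fun i hi => ?_
  rw [derivative_C_mul, derivative_pow, hy]
  simp only [Nat.add_sub_cancel]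
  apply aux_merge
  have e1 : (-((N:ℝ)+1)) + 1 = -(N:ℝ) := by ring
  have e2 : ((N:ℝ)+1) + α + β + 1 + 1 = (N:ℝ) + (α+1) + (β+1) + 1 := by ring
  have h1 : (α+1) ≠ 0 := by simpa [ascPochhammer_one] using hα 1 (by omega)
  have h2 : (ascPochhammer ℝ i).eval (α+1+1) ≠ 0 := by
    have := hα (i+1) (by simp at hi; omega)
    rw [asc_succ_left_eval] at this
    exact fun h => this (by rw [h, mul_zero])
  have hf1 : ((N.factorial : ℝ)) ≠ 0 := by positivity
  have hf2 : ((i.factorial : ℝ)) ≠ 0 := by positivity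
  push_cast
  rw [asc_succ_left_eval N, asc_succ_left_eval i (-((N:ℝ)+1)),
    asc_succ_left_eval i (((N:ℝ)+1) + α + β + 1), asc_succ_left_eval i (α+1),
    e1, e2]
  push_cast [Nat.factorial_succ]
  have hi1 : ((i:ℝ)+1) ≠ 0 := by positivity
  have hN1 : ((N:ℝ)+1) ≠ 0 := by positivity
  field_simp


/-- `(d/dx)^m P_n^{(α,β)} = 2^{−m} (n+α+β+1)_m · P_{n−m}^{(α+m,β+m)}` for `0 ≤ m ≤ n`. -/
theorem jacobi_iterated_derivative (α β : ℝ) (n m : ℕ) (hm : m ≤ n)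
    (hα : ∀ k ≤ n, (ascPochhammer ℝ k).eval (α + 1) ≠ 0) :
    Polynomial.derivative^[m] (jacobiP α β n) =
      C ((1 / 2 : ℝ) ^ m * (ascPochhammer ℝ m).eval ((n : ℝ) + α + β + 1)) *
        jacobiP (α + m) (β + m) (n - m) := by
  induction m with
  | zero => simp [ascPochhammer_zero]
  | succ m ih =>
    have hm' : m ≤ n := by omega
    have hNm : n - m = (n - (m+1)) + 1 := by omega
    have hyp : ∀ k ≤ (n - (m+1)) + 1, (ascPochhammer ℝ k).eval ((α + m) + 1) ≠ 0 := by
      intro k hk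
      have h := hα (m + k) (by omega)
      have hmul : (ascPochhammer ℝ (m + k)).eval (α + 1) =
          (ascPochhammer ℝ m).eval (α + 1) * (ascPochhammer ℝ k).eval ((α + 1) + m) := by
        rw [← ascPochhammer_mul, eval_mul, eval_comp, eval_add, eval_X, eval_natCast]
      rw [hmul] at h
      have : (ascPochhammer ℝ k).eval ((α + 1) + m) ≠ 0 := fun h0 => h (by rw [h0, mul_zero])
      have e : (α + (m:ℝ)) + 1 = (α + 1) + m := by ring
      rwa [e]
    rw [Function.iterate_succ_apply', ih hm', derivative_C_mul, hNm,
      jacobi_deriv_one _ _ _ hyp, ← mul_assoc, ← C_mul]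
    have hc : ((n:ℝ) - (m+1)) = ((n - (m+1) : ℕ) : ℝ) := by
      rw [Nat.cast_sub hm]; push_cast; ring
    congr 1
    · rw [ascPochhammer_succ_eval, ← hc]
      push_cast
      ring
    · have e1 : α + ((m:ℕ):ℝ) + 1 = α + ((m+1 : ℕ) : ℝ) := by push_cast; ring
      have e2 : β + ((m:ℕ):ℝ) + 1 = β + ((m+1 : ℕ) : ℝ) := by push_cast; ring
      rw [e1, e2]
end

section
/- Define φ_n^{(α,β)}(μ) := Σ_{k=0}^{[n/2]} [(d/dx)^{2k} P_n^{(α,β)}(x)]|_{x=1} · μ^k. Then (n+α)·φ_{n−1}^{(α,β+1)}(μ) = n·φ_n^{(α,β)}(μ) − 2μ·(d/dμ)φ_n^{(α,β)}(μ). -/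
/-!
Differentiating `P_n^{(α,β)} = (α+1)_n/n! · Σ_j (-n)_j (n+α+β+1)_j / (j! (α+1)_j) · ((1-x)/2)^j`
at `x = 1` shows that the coefficient of `μ^k` in `φ_n^{(α,β)}` is
`(α+1)_n/n! · (-n)_{2k} (n+α+β+1)_{2k} / (α+1)_{2k} · 4^{-k}`, which vanishes for `2k > n`.
As `n φ - 2μ φ'` multiplies the coefficient of `μ^k` by `n - 2k`, the identity reduces to
`(n+α) (α+1)_{n-1} = (α+1)_n` and `n (1-n)_{2k} = (n-2k) (-n)_{2k}`, both instances of
`(a)_m (a+m) = (a)_{m+1} = a (a+1)_m`.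
-/

open Polynomial

open scoped Nat

theorem ascPochhammer_eval_mul_add_natCast {R : Type*} [CommSemiring R] (a : R) (m : ℕ) :
    (ascPochhammer R m).eval a * (a + m) = a * (ascPochhammer R m).eval (a + 1) := by
  rw [← ascPochhammer_succ_eval, ascPochhammer_succ_left, eval_mul, eval_X, eval_comp,
    eval_add, eval_X, eval_one]

namespace Polynomial

theorem iterate_derivative_comp_C_mul_one_sub_X_eval_one {R : Type*} [CommRing R] (q : R[X])
    (c : R) (m : ℕ) :
    (derivative^[m] (q.comp (C c * (1 - X)))).eval 1 = m ! * (-c) ^ m * q.coeff m := by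
  have hcomp : q.comp (C c * (1 - X)) = (q.comp (C c * X)).comp (1 - X) := by
    rw [comp_assoc, mul_comp, C_comp, X_comp]
  rw [hcomp, iterate_derivative_comp_one_sub_X, eval_mul, eval_comp, eval_sub, eval_one, eval_X,
    sub_self, ← coeff_zero_eq_eval_zero, coeff_iterate_derivative, zero_add,
    Nat.descFactorial_self, comp_C_mul_X_coeff, nsmul_eq_mul, eval_pow, eval_neg, eval_one,
    neg_pow c]
  ring

theorem coeff_C_mul_sub_C_mul_X_mul_derivative {R : Type*} [CommRing R] (p : R[X])
    (a b : R) (k : ℕ) :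
    (C a * p - C b * X * derivative p).coeff k = (a - b * k) * p.coeff k := by
  rw [coeff_sub, mul_assoc, coeff_C_mul, coeff_C_mul]
  cases k with
  | zero => simp
  | succ k =>
    rw [coeff_X_mul, coeff_derivative]
    push_cast
    ring

end Polynomial

open Finset

noncomputable def jacobiCoeff (α β : ℝ) (n j : ℕ) : ℝ :=
  (ascPochhammer ℝ n).eval (α + 1) / n ! *
    ((ascPochhammer ℝ j).eval (-(n : ℝ)) * (ascPochhammer ℝ j).eval ((n : ℝ) + α + β + 1) /
      (j ! * (ascPochhammer ℝ j).eval (α + 1)))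

noncomputable def phiCoeff (α β : ℝ) (n k : ℕ) : ℝ :=
  (ascPochhammer ℝ n).eval (α + 1) / n ! *
    ((ascPochhammer ℝ (2 * k)).eval (-(n : ℝ)) *
      (ascPochhammer ℝ (2 * k)).eval ((n : ℝ) + α + β + 1) /
        (ascPochhammer ℝ (2 * k)).eval (α + 1)) * (1 / 4) ^ k

theorem jacobiP_eq_comp (α β : ℝ) (n : ℕ) :
    jacobiP α β n =
      (∑ j ∈ range (n + 1), C (jacobiCoeff α β n j) * X ^ j).comp (C (1 / 2) * (1 - X)) := by
  simp only [jacobiP, jacobiCoeff, Polynomial.sum_comp, mul_comp, C_comp, X_pow_comp, mul_sum,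
    C_mul]
  ac_rfl

theorem iterate_derivative_jacobiP_eval_one (α β : ℝ) {n k : ℕ} (hk : 2 * k ≤ n) :
    (derivative^[2 * k] (jacobiP α β n)).eval 1 = phiCoeff α β n k := by
  rw [jacobiP_eq_comp, iterate_derivative_comp_C_mul_one_sub_X_eval_one, finsetSum_coeff]
  simp only [coeff_C_mul_X_pow, sum_ite_eq, mem_range, Nat.lt_succ_of_le hk, if_true,
    jacobiCoeff, phiCoeff]
  have hfac : ((2 * k) ! : ℝ) ≠ 0 := by positivity
  rw [pow_mul]
  field_simp
  ring

theorem phiCoeff_eq_zero_of_lt (α β : ℝ) {n k : ℕ} (hk : n < 2 * k) : phiCoeff α β n k = 0 := by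
  simp [phiCoeff, ascPochhammer_eval_neg_coe_nat_of_lt hk]

theorem coeff_phi (α β : ℝ) (n k : ℕ) : (phi α β n).coeff k = phiCoeff α β n k := by
  simp only [phi, finsetSum_coeff, coeff_C_mul_X_pow, sum_ite_eq, mem_range]
  split_ifs with hk
  · exact iterate_derivative_jacobiP_eval_one α β (by omega)
  · exact (phiCoeff_eq_zero_of_lt α β (by omega)).symm

theorem add_mul_phiCoeff_succ (α β : ℝ) (N k : ℕ) :
    ((N + 1 : ℝ) + α) * phiCoeff α (β + 1) N k =
      ((N + 1 : ℝ) - 2 * k) * phiCoeff α β (N + 1) k := by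
  have hαN : (ascPochhammer ℝ (N + 1)).eval (α + 1) =
      (ascPochhammer ℝ N).eval (α + 1) * (N + 1 + α) := by
    rw [ascPochhammer_succ_eval]; ring
  have hnegN : (ascPochhammer ℝ (2 * k)).eval (-(N : ℝ)) =
      ((N + 1 : ℝ) - 2 * k) * (ascPochhammer ℝ (2 * k)).eval (-(N + 1 : ℝ)) / (N + 1) := by
    have hshift := ascPochhammer_eval_mul_add_natCast (-(N + 1 : ℝ)) (2 * k)
    rw [show -(N + 1 : ℝ) + 1 = -N by ring] at hshift
    push_cast at hshift
    field_simp
    linear_combination hshift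
  have hβ : (N : ℝ) + α + (β + 1) + 1 = ((N + 1 : ℕ) : ℝ) + α + β + 1 := by push_cast; ring
  simp only [phiCoeff, hβ, Nat.factorial_succ, hαN, hnegN]
  push_cast
  field_simp

theorem phi_derivative_rel_down_general (α β : ℝ) (n : ℕ) (hn : 1 ≤ n) :
    C ((n : ℝ) + α) * phi α (β + 1) (n - 1) =
      C (n : ℝ) * phi α β n - C (2 : ℝ) * X * Polynomial.derivative (phi α β n) := by
  obtain ⟨N, rfl⟩ : ∃ N, n = N + 1 := ⟨n - 1, by omega⟩
  ext k
  rw [coeff_C_mul, coeff_C_mul_sub_C_mul_X_mul_derivative, coeff_phi, coeff_phi,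
    Nat.add_sub_cancel]
  push_cast
  exact add_mul_phiCoeff_succ α β N k

/-- `(n+α)·φ_{n−1}^{(α,β+1)}(μ) = n·φ_n^{(α,β)}(μ) − 2μ·(φ_n^{(α,β)})'(μ)`. -/
theorem phi_derivative_rel_down (α β : ℝ) (n : ℕ) (hn : 1 ≤ n)
    (hα : ∀ k ≤ n, (ascPochhammer ℝ k).eval (α + 1) ≠ 0) :
    C ((n : ℝ) + α) * phi α (β + 1) (n - 1) =
      C (n : ℝ) * phi α β n - C (2 : ℝ) * X * Polynomial.derivative (phi α β n) :=
  phi_derivative_rel_down_general α β n hn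
end

section
/- Define φ_n^{(α,β)}(μ) := Σ_{k=0}^{[n/2]} [(d/dx)^{2k} P_n^{(α,β)}(x)]|_{x=1} · μ^k. Then (n+α+β+1)·φ_n^{(α,β+1)}(μ) = (n+α+β+1)·φ_n^{(α,β)}(μ) + 2μ·(d/dμ)φ_n^{(α,β)}(μ). -/
open Polynomial

lemma iter_deriv_one_sub_X_pow (m j : ℕ) :
    derivative^[m] (((1 : ℝ[X]) - X) ^ j) =
      C ((-1 : ℝ) ^ m * (j.descFactorial m : ℝ)) * (1 - X) ^ (j - m) := by
  induction m with
  | zero => simp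
  | succ m ih =>
    rw [Function.iterate_succ_apply', ih, derivative_C_mul, derivative_pow]
    have hd : derivative ((1 : ℝ[X]) - X) = -1 := by simp
    rw [hd, Nat.descFactorial_succ, Nat.sub_sub]
    push_cast
    simp only [map_mul, map_pow, map_neg, map_one, map_natCast]
    ring

lemma eval_iter_deriv (m j : ℕ) :
    (derivative^[m] (((1 : ℝ[X]) - X) ^ j)).eval 1 =
      if j = m then (-1 : ℝ) ^ m * (m.factorial : ℝ) else 0 := by
  rw [iter_deriv_one_sub_X_pow]
  simp only [eval_mul, eval_pow, eval_sub, eval_one, eval_X, sub_self, eval_C]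
  rcases lt_trichotomy j m with h | h | h
  · rw [if_neg h.ne, Nat.descFactorial_eq_zero_iff_lt.mpr h]
    simp
  · subst h
    simp [Nat.descFactorial_self]
  · rw [if_neg h.ne', zero_pow (by omega : j - m ≠ 0)]
    ring

lemma jacobi_deriv_eval (α β : ℝ) (n m : ℕ) (hm : m ≤ n) :
    (derivative^[m] (jacobiP α β n)).eval 1 =
      ((ascPochhammer ℝ n).eval (α + 1) / (n.factorial : ℝ)) *
        ((ascPochhammer ℝ m).eval (-(n : ℝ)) * (ascPochhammer ℝ m).eval ((n : ℝ) + α + β + 1) /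
          ((m.factorial : ℝ) * (ascPochhammer ℝ m).eval (α + 1))) *
        ((1 / 2 : ℝ) ^ m * ((-1 : ℝ) ^ m * (m.factorial : ℝ))) := by
  unfold jacobiP
  rw [iterate_derivative_C_mul, iterate_derivative_sum]
  simp only [mul_pow, ← C_pow, iterate_derivative_C_mul, eval_mul, eval_C, eval_finset_sum]
  simp only [eval_iter_deriv, mul_ite, mul_zero]
  rw [Finset.sum_ite_eq' (Finset.range (n + 1)) m]
  rw [if_pos (Finset.mem_range.mpr (by omega))]
  ring

lemma asc_key (m : ℕ) (x : ℝ) :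
    x * (ascPochhammer ℝ m).eval (x + 1) = (ascPochhammer ℝ m).eval x * (x + m) := by
  have h1 : (ascPochhammer ℝ (m + 1)).eval x = x * (ascPochhammer ℝ m).eval (x + 1) := by
    rw [ascPochhammer_succ_left]
    simp [eval_comp]
  rw [← h1, ascPochhammer_succ_eval]

/-- `(n+α+β+1)·φ_n^{(α,β+1)}(μ) = (n+α+β+1)·φ_n^{(α,β)}(μ) + 2μ·(φ_n^{(α,β)})'(μ)`. -/
theorem phi_derivative_rel_up (α β : ℝ) (n : ℕ) (hn : 1 ≤ n)
    (hα : ∀ k ≤ n, (ascPochhammer ℝ k).eval (α + 1) ≠ 0) :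
    C ((n : ℝ) + α + β + 1) * phi α (β + 1) n =
      C ((n : ℝ) + α + β + 1) * phi α β n + C (2 : ℝ) * X * Polynomial.derivative (phi α β n) := by
  set x : ℝ := (n : ℝ) + α + β + 1 with hx
  have hsc : ∀ k ∈ Finset.range (n / 2 + 1),
      x * (derivative^[2 * k] (jacobiP α (β + 1) n)).eval 1 =
        x * (derivative^[2 * k] (jacobiP α β n)).eval 1 +
          2 * (k : ℝ) * (derivative^[2 * k] (jacobiP α β n)).eval 1 := by
    intro k hk
    have h2k : 2 * k ≤ n := by
      have := Finset.mem_range.mp hk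
      omega
    rw [jacobi_deriv_eval α (β + 1) n (2 * k) h2k, jacobi_deriv_eval α β n (2 * k) h2k]
    have e : (n : ℝ) + α + (β + 1) + 1 = x + 1 := by rw [hx]; ring
    rw [e]
    have key := asc_key (2 * k) x
    push_cast at key
    linear_combination ((ascPochhammer ℝ n).eval (α + 1) / (n.factorial : ℝ) *
      ((ascPochhammer ℝ (2 * k)).eval (-(n : ℝ)) /
        (((2 * k).factorial : ℝ) * (ascPochhammer ℝ (2 * k)).eval (α + 1))) *
      ((1 / 2 : ℝ) ^ (2 * k) * ((-1 : ℝ) ^ (2 * k) * ((2 * k).factorial : ℝ)))) * key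
  unfold phi
  rw [derivative_sum, Finset.mul_sum, Finset.mul_sum, Finset.mul_sum, ← Finset.sum_add_distrib]
  refine Finset.sum_congr rfl fun k hk => ?_
  rw [derivative_C_mul, derivative_X_pow]
  have h := hsc k hk
  rcases Nat.eq_zero_or_pos k with hk0 | hk0
  · subst hk0
    simp only [Nat.cast_zero, map_zero, zero_mul, mul_zero, pow_zero, mul_one, add_zero]
    rw [← C_mul, ← C_mul]
    simp only [Nat.mul_zero, Nat.cast_zero, mul_zero, zero_mul, add_zero] at h
    rw [h]
  · have hXk : X * X ^ (k - 1) = (X : ℝ[X]) ^ k := by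
      rw [← pow_succ']
      congr 1
      omega
    calc C x * (C ((derivative^[2 * k] (jacobiP α (β + 1) n)).eval 1) * X ^ k)
        = C (x * (derivative^[2 * k] (jacobiP α (β + 1) n)).eval 1) * X ^ k := by
          rw [C_mul]; ring
      _ = C (x * (derivative^[2 * k] (jacobiP α β n)).eval 1 +
            2 * (k : ℝ) * (derivative^[2 * k] (jacobiP α β n)).eval 1) * X ^ k := by rw [h]
      _ = _ := by
          rw [C_add, C_mul, C_mul, C_mul, ← hXk]
          ring
end

section
/- Define φ_n^{(α,β)}(μ) := Σ_{k=0}^{[n/2]} [(d/dx)^{2k} P_n^{(α,β)}(x)]|_{x=1} · μ^k. Then for every real A, (n+α+β)/(n+α) · φ_n^{(α,β)}(μ) + A·φ_{n−1}^{(α,β)}(μ) = ((1+A)n+α+β)/(n+α) · φ_n^{(α,β−1)}(μ) + 2μ·(1−A)/(n+α) · (d/dμ)φ_n^{(α,β−1)}(μ). -/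
open Polynomial

lemma asc_neg_nat_eq_zero {n m : ℕ} (h : n < m) :
    (ascPochhammer ℝ m).eval (-(n:ℝ)) = 0 := by
  induction m with
  | zero => omega
  | succ m ih =>
    rw [ascPochhammer_succ_eval]
    rcases Nat.lt_succ_iff_lt_or_eq.mp h with h | h
    · rw [ih h, zero_mul]
    · subst h; simp

lemma asc_shift (m : ℕ) (x : ℝ) :
    x * (ascPochhammer ℝ m).eval (x+1) = (ascPochhammer ℝ m).eval x * (x + m) := by
  have h1 : (ascPochhammer ℝ (m+1)).eval x = x * (ascPochhammer ℝ m).eval (x+1) := by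
    rw [ascPochhammer_succ_left]
    simp [eval_comp]
  rw [← h1, ascPochhammer_succ_eval]

lemma iter_deriv_jacobi_eval_one (α β : ℝ) (n m : ℕ) :
    (Polynomial.derivative^[m] (jacobiP α β n)).eval 1 =
      (ascPochhammer ℝ n).eval (α + 1) / (n.factorial : ℝ) *
        ((ascPochhammer ℝ m).eval (-(n : ℝ)) * (ascPochhammer ℝ m).eval ((n : ℝ) + α + β + 1) /
          ((m.factorial : ℝ) * (ascPochhammer ℝ m).eval (α + 1))) * (-2⁻¹ : ℝ) ^ m *
        (m.factorial : ℝ) := by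
  have hbase : ∀ j : ℕ, (C (1/2 : ℝ) * (1 - X)) ^ j = C ((-2⁻¹ : ℝ)^j) * (X - C 1)^j := by
    intro j
    have hb : (C (1/2 : ℝ) * (1 - X)) = C (-2⁻¹ : ℝ) * (X - C 1) := by
      rw [show (-2⁻¹ : ℝ) = -(2⁻¹) from rfl, map_neg, show ((1:ℝ)/2) = 2⁻¹ by norm_num, C_1]
      ring
    rw [hb, mul_pow, ← map_pow]
  rw [jacobiP]
  simp_rw [hbase, ← mul_assoc, ← map_mul, iterate_derivative_C_mul, iterate_derivative_sum,
    iterate_derivative_C_mul, Polynomial.iterate_derivative_X_sub_pow]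
  rw [eval_mul, eval_C, eval_finset_sum]
  simp only [eval_mul, eval_C, eval_smul, eval_pow, eval_sub, eval_X, smul_eq_mul, sub_self]
  rw [Finset.sum_eq_single m]
  · rw [Nat.descFactorial_self, Nat.sub_self, pow_zero, nsmul_eq_mul, mul_one]
    ring
  · intro j hj hne
    rcases lt_or_gt_of_ne hne with h | h
    · rw [Nat.descFactorial_eq_zero_iff_lt.mpr h]
      simp
    · rw [zero_pow (by omega : j - m ≠ 0)]
      simp
  · intro hm
    rw [Finset.mem_range, not_lt] at hm
    rw [asc_neg_nat_eq_zero (by omega)]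
    simp

noncomputable def cf (α β : ℝ) (n k : ℕ) : ℝ :=
  (ascPochhammer ℝ n).eval (α + 1) / (n.factorial : ℝ) *
    ((ascPochhammer ℝ (2*k)).eval (-(n : ℝ)) *
        (ascPochhammer ℝ (2*k)).eval ((n : ℝ) + α + β + 1) /
      (((2*k).factorial : ℝ) * (ascPochhammer ℝ (2*k)).eval (α + 1))) * (-2⁻¹ : ℝ) ^ (2*k) *
    ((2*k).factorial : ℝ)

lemma phi_eq (α β : ℝ) (n : ℕ) :
    phi α β n = ∑ k ∈ Finset.range (n/2+1), C (cf α β n k) * X^k := by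
  unfold phi cf
  exact Finset.sum_congr rfl fun k _ => by rw [iter_deriv_jacobi_eval_one]

set_option maxHeartbeats 2000000 in
lemma key (α β A : ℝ) (n k : ℕ) (hn : 1 ≤ n) (hna : (n:ℝ)+α ≠ 0)
    (hq : (ascPochhammer ℝ (2*k)).eval (α+1) ≠ 0) :
    ((n:ℝ)+α+β)/((n:ℝ)+α) * cf α β n k + A * cf α β (n-1) k
      = ((1+A)*(n:ℝ)+α+β)/((n:ℝ)+α) * cf α (β-1) n k
        + 2*(1-A)/((n:ℝ)+α) * (k:ℝ) * cf α (β-1) n k := by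
  obtain ⟨p, rfl⟩ : ∃ p, n = p+1 := ⟨n-1, by omega⟩
  simp only [Nat.add_sub_cancel]
  unfold cf
  have en : ((p+1:ℕ):ℝ) = (p:ℝ)+1 := by push_cast; ring
  have e1 : ((p+1:ℕ):ℝ) + α + β + 1 = ((p:ℝ)+α+β+1) + 1 := by push_cast; ring
  have e2 : ((p+1:ℕ):ℝ) + α + (β-1) + 1 = (p:ℝ)+α+β+1 := by push_cast; ring
  have hQ : (ascPochhammer ℝ (p+1)).eval (α+1)
      = (ascPochhammer ℝ p).eval (α+1) * ((α+1)+(p:ℝ)) := ascPochhammer_succ_eval p (α+1)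
  have hF : (((p+1).factorial : ℕ):ℝ) = ((p:ℝ)+1) * (p.factorial:ℝ) := by
    rw [Nat.factorial_succ]; push_cast; ring
  have hb := asc_shift (2*k) ((p:ℝ)+α+β+1)
  have ha := asc_shift (2*k) (-(((p+1:ℕ)):ℝ))
  rw [show (-(((p+1:ℕ)):ℝ)) + 1 = -(p:ℝ) by push_cast; ring] at ha
  rw [en] at ha hna
  rw [e1, e2, hQ, hF, en]
  set T : ℝ := (((2*k).factorial : ℕ):ℝ) with hT
  set q : ℝ := (ascPochhammer ℝ (2*k)).eval (α+1) with hqd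
  set Q' : ℝ := (ascPochhammer ℝ p).eval (α+1) with hQd
  set a : ℝ := (ascPochhammer ℝ (2*k)).eval (-((p:ℝ)+1)) with had
  set a' : ℝ := (ascPochhammer ℝ (2*k)).eval (-(p:ℝ)) with had'
  set b : ℝ := (ascPochhammer ℝ (2*k)).eval (((p:ℝ)+α+β+1)+1) with hbd
  set b' : ℝ := (ascPochhammer ℝ (2*k)).eval ((p:ℝ)+α+β+1) with hbd'
  set s : ℝ := (-2⁻¹:ℝ)^(2*k) with hsd
  have hTne : T ≠ 0 := by rw [hT]; exact_mod_cast Nat.factorial_ne_zero _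
  have hFp : (p.factorial:ℝ) ≠ 0 := by exact_mod_cast Nat.factorial_ne_zero _
  have hp1 : ((p:ℝ)+1) ≠ 0 := by positivity
  push_cast at ha hb
  have cleared : ((p:ℝ)+1+α+β) * (Q' * (α+1+(p:ℝ)) * a * b * s)
        + A * Q' * a' * b' * s * (((p:ℝ)+1)+α) * ((p:ℝ)+1)
      = ((1+A)*((p:ℝ)+1)+α+β) * (Q' * (α+1+(p:ℝ)) * a * b' * s)
        + 2*(1-A)*(k:ℝ) * (Q' * (α+1+(p:ℝ)) * a * b' * s) := by
    linear_combination (Q' * (α+1+(p:ℝ)) * a * s) * hb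
      - (A * Q' * s * b' * ((p:ℝ)+1+α)) * ha
  linear_combination (norm := field_simp <;> ring)
    (1 / ((((p:ℝ)+1)+α) * (((p:ℝ)+1) * (p.factorial:ℝ) * q))) * cleared

lemma X_mul_deriv (c : ℝ) (k : ℕ) :
    (X:ℝ[X]) * Polynomial.derivative (C c * X^k) = C (c * k) * X^k := by
  rw [derivative_C_mul, derivative_X_pow]
  cases k with
  | zero => simp
  | succ m =>
    rw [map_mul]
    push_cast
    ring

/-- For every real `A`:
`(n+α+β)/(n+α)·φ_n^{(α,β)} + A·φ_{n−1}^{(α,β)}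
  = ((1+A)n+α+β)/(n+α)·φ_n^{(α,β−1)} + 2μ(1−A)/(n+α)·(φ_n^{(α,β−1)})'`. -/
theorem phi_main_rel (α β A : ℝ) (n : ℕ) (hn : 1 ≤ n) (hna : (n : ℝ) + α ≠ 0)
    (hα : ∀ k ≤ n, (ascPochhammer ℝ k).eval (α + 1) ≠ 0) :
    C (((n : ℝ) + α + β) / ((n : ℝ) + α)) * phi α β n + C A * phi α β (n - 1) =
      C (((1 + A) * (n : ℝ) + α + β) / ((n : ℝ) + α)) * phi α (β - 1) n +
        C (2 * (1 - A) / ((n : ℝ) + α)) * X * Polynomial.derivative (phi α (β - 1) n) := by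
  rw [phi_eq α β n, phi_eq α β (n-1), phi_eq α (β-1) n]
  rw [Finset.sum_subset (Finset.range_subset_range.mpr (by omega : (n-1)/2+1 ≤ n/2+1))
    (fun k _ hk => by
      have h1 : n - 1 < 2*k := by
        simp only [Finset.mem_range, not_lt] at hk; omega
      simp [cf, asc_neg_nat_eq_zero h1])]
  rw [derivative_sum]
  simp only [Finset.mul_sum]
  rw [← Finset.sum_add_distrib, ← Finset.sum_add_distrib]
  refine Finset.sum_congr rfl fun k hk => ?_
  have hk' : 2*k ≤ n := by
    simp only [Finset.mem_range] at hk; omega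
  have hkey := key α β A n k hn hna (hα (2*k) hk')
  rw [mul_assoc (C (2 * (1 - A) / ((n:ℝ) + α))) X, X_mul_deriv]
  rw [← mul_assoc, ← mul_assoc, ← mul_assoc, ← mul_assoc, ← map_mul, ← map_mul, ← map_mul,
    ← map_mul, ← add_mul, ← add_mul, ← map_add, ← map_add]
  congr 1
  congr 1
  linear_combination hkey
end

section
/- Define φ_n^{(α,β)}(μ) := Σ_{k=0}^{[n/2]} [(d/dx)^{2k} P_n^{(α,β)}(x)]|_{x=1} · μ^k. Then φ_n^{(α,β)}(μ) − φ_n^{(α,β)}(0) = (1/4)(n+α+β+1)(n+α+β+2) · μ · φ_{n−2}^{(α+2,β+2)}(μ) for n ≥ 2. -/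
open Polynomial

lemma asc_succ_left (n : ℕ) (x : ℝ) :
    (ascPochhammer ℝ (n+1)).eval x = x * (ascPochhammer ℝ n).eval (x + 1) := by
  rw [ascPochhammer_succ_left]
  simp [eval_comp]

lemma jacobi_deriv (α β : ℝ) (m : ℕ) (h1 : α + 1 ≠ 0) :
    derivative (jacobiP α β (m+1)) =
      C (((m:ℝ) + 1 + α + β + 1) / 2) * jacobiP (α+1) (β+1) m := by
  have hdv : derivative (C (1/2:ℝ) * (1 - X)) = C (-(1/2) : ℝ) := by
    rw [derivative_C_mul]; simp
  set v : Polynomial ℝ := C (1/2:ℝ) * (1 - X) with hv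
  have key : ∀ k : ℕ,
      (eval (α+1) (ascPochhammer ℝ (m+1)) / ((m+1).factorial : ℝ)) *
        (eval (-((m:ℝ)+1)) (ascPochhammer ℝ (k+1)) * eval ((m:ℝ)+1+α+β+1) (ascPochhammer ℝ (k+1)) /
          (((k+1).factorial : ℝ) * eval (α+1) (ascPochhammer ℝ (k+1))) * ((k:ℝ)+1) * -(1/2)) =
      (((m:ℝ)+1+α+β+1)/2) * ((eval (α+2) (ascPochhammer ℝ m) / (m.factorial : ℝ)) *
        (eval (-(m:ℝ)) (ascPochhammer ℝ k) * eval ((m:ℝ)+(α+1)+(β+1)+1) (ascPochhammer ℝ k) /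
          ((k.factorial : ℝ) * eval (α+2) (ascPochhammer ℝ k)))) := by
    intro k
    have e1 : eval (α+1) (ascPochhammer ℝ (m+1)) = (α+1) * eval (α+2) (ascPochhammer ℝ m) := by
      simpa [show α+1+1 = α+2 by ring] using asc_succ_left m (α+1)
    have e2 : eval (α+1) (ascPochhammer ℝ (k+1)) = (α+1) * eval (α+2) (ascPochhammer ℝ k) := by
      simpa [show α+1+1 = α+2 by ring] using asc_succ_left k (α+1)
    have e3 : eval (-((m:ℝ)+1)) (ascPochhammer ℝ (k+1))
        = (-((m:ℝ)+1)) * eval (-(m:ℝ)) (ascPochhammer ℝ k) := by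
      simpa [show -((m:ℝ)+1) + 1 = -(m:ℝ) by ring] using asc_succ_left k (-((m:ℝ)+1))
    have e4 : eval ((m:ℝ)+1+α+β+1) (ascPochhammer ℝ (k+1))
        = ((m:ℝ)+1+α+β+1) * eval ((m:ℝ)+(α+1)+(β+1)+1) (ascPochhammer ℝ k) := by
      simpa [show (m:ℝ)+1+α+β+1+1 = (m:ℝ)+(α+1)+(β+1)+1 by ring]
        using asc_succ_left k ((m:ℝ)+1+α+β+1)
    rw [e1, e2, e3, e4, Nat.factorial_succ, Nat.factorial_succ]
    push_cast
    rcases eq_or_ne (eval (α+2) (ascPochhammer ℝ k)) 0 with h | h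
    · simp [h]
    · have hm : ((m:ℝ)+1) ≠ 0 := by positivity
      have hk : ((k:ℝ)+1) ≠ 0 := by positivity
      have hmf : (m.factorial : ℝ) ≠ 0 := by exact_mod_cast m.factorial_ne_zero
      have hkf : (k.factorial : ℝ) ≠ 0 := by exact_mod_cast k.factorial_ne_zero
      field_simp
  have hterm : ∀ (c : ℝ) (k : ℕ), derivative (C c * v ^ k) =
      C (c * (k : ℝ) * (-(1/2))) * v ^ (k-1) := by
    intro c k
    rw [derivative_C_mul, derivative_pow, hdv, map_mul, map_mul]
    ring
  rw [jacobiP, jacobiP, derivative_C_mul, derivative_sum]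
  rw [← hv]
  simp only [hterm]
  rw [Finset.sum_range_succ']
  simp only [Nat.cast_zero, mul_zero, zero_mul, map_zero, add_zero, Nat.add_sub_cancel]
  rw [Finset.mul_sum, Finset.mul_sum, Finset.mul_sum]
  refine Finset.sum_congr rfl fun j hj => ?_
  simp only [← mul_assoc, ← map_mul]
  push_cast
  simp only [show α + 1 + 1 = α + 2 by ring]
  congr 1
  congr 1
  linear_combination key j

/-- `φ_n^{(α,β)}(μ) − φ_n^{(α,β)}(0) = (1/4)(n+α+β+1)(n+α+β+2)·μ·φ_{n−2}^{(α+2,β+2)}(μ)`. -/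
theorem phi_shift_rel (α β : ℝ) (n : ℕ) (hn : 2 ≤ n)
    (hα : ∀ k ≤ n, (ascPochhammer ℝ k).eval (α + 1) ≠ 0) :
    phi α β n - C ((phi α β n).eval 0) =
      C ((((n : ℝ) + α + β + 1) * ((n : ℝ) + α + β + 2)) / 4) * X *
        phi (α + 2) (β + 2) (n - 2) := by
  obtain ⟨m, rfl⟩ : ∃ m, n = m + 2 := ⟨n - 2, by omega⟩
  have h1 : α + 1 ≠ 0 := by
    have := hα 1 (by omega); simpa [ascPochhammer_one] using this
  have h2 : α + 2 ≠ 0 := by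
    have h := hα 2 (by omega)
    have e : (ascPochhammer ℝ 2).eval (α+1) = (α+1) * ((α+1) + 1) := by
      rw [show (2:ℕ) = 1 + 1 from rfl, asc_succ_left, ascPochhammer_one]
      simp
    rw [e] at h
    intro hc
    exact (mul_ne_zero_iff.mp h).2 (by linarith)
  have h2' : α + 1 + 1 ≠ 0 := by intro hc; exact h2 (by linarith)
  have hD2 : derivative^[2] (jacobiP α β (m+2)) =
      C (((((m:ℕ):ℝ)+2+α+β+1) * (((m:ℕ):ℝ)+2+α+β+2)) / 4) * jacobiP (α+2) (β+2) m := by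
    have hidx : m + 2 = m + 1 + 1 := rfl
    rw [hidx]
    simp only [Function.iterate_succ, Function.iterate_zero, Function.comp_apply, id_eq]
    rw [jacobi_deriv α β (m+1) h1, derivative_C_mul, jacobi_deriv (α+1) (β+1) m h2',
      ← mul_assoc, ← map_mul]
    rw [show α+1+1 = α+2 by ring, show β+1+1 = β+2 by ring]
    congr 2
    push_cast; ring
  have hDk : ∀ k : ℕ, derivative^[2*(k+1)] (jacobiP α β (m+2)) =
      C (((((m:ℕ):ℝ)+2+α+β+1) * (((m:ℕ):ℝ)+2+α+β+2)) / 4) *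
        derivative^[2*k] (jacobiP (α+2) (β+2) m) := by
    intro k
    rw [show 2*(k+1) = 2*k + 2 by ring, Function.iterate_add_apply, hD2,
      Polynomial.iterate_derivative_C_mul]
  have h0 : (phi α β (m+2)).eval 0 = (jacobiP α β (m+2)).eval 1 := by
    rw [phi, eval_finset_sum, Finset.sum_range_succ']
    simp
  rw [h0, show m + 2 - 2 = m by omega, phi, phi]
  rw [show (m+2)/2 = m/2 + 1 from Nat.add_div_right m (by norm_num)]
  rw [Finset.sum_range_succ']
  simp only [Nat.mul_zero, Function.iterate_zero, id_eq, pow_zero, mul_one]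
  rw [add_sub_cancel_right, Finset.mul_sum]
  refine Finset.sum_congr rfl fun j hj => ?_
  rw [hDk j, eval_mul, eval_C, map_mul]
  push_cast
  ring
end

section
/- Let p be a real polynomial of degree m ≥ 2 with positive coefficients b_0, b_1, b_2 in degrees 0, 1, 2 (writing p(μ) = Σ_{k=0}^m b_k μ^k). If p has only real (negative) zeros, then b_1² / (b_0 b_2) ≥ 2m/(m−1). -/
open Polynomial

lemma aux_coeffs (t : Multiset ℝ) :
    ((t.map (fun a => (1 : ℝ[X]) + C a * X)).prod.coeff 0 = 1 ∧
     (t.map (fun a => (1 : ℝ[X]) + C a * X)).prod.coeff 1 = t.sum ∧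
     2 * (t.map (fun a => (1 : ℝ[X]) + C a * X)).prod.coeff 2
        = t.sum ^ 2 - (t.map (fun x => x ^ 2)).sum) := by
  induction t using Multiset.induction_on with
  | empty => simp [coeff_one]
  | cons a s ih =>
    obtain ⟨h0, h1, h2⟩ := ih
    simp only [Multiset.map_cons, Multiset.prod_cons, Multiset.sum_cons]
    set f := (s.map (fun a => (1 : ℝ[X]) + C a * X)).prod with hf
    have e0 : ((1 + C a * X) * f).coeff 0 = f.coeff 0 := by
      simp [add_mul, mul_assoc, coeff_X_mul]
    have ex1 : (X * f).coeff 1 = f.coeff 0 := coeff_X_mul f 0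
    have ex2 : (X * f).coeff 2 = f.coeff 1 := coeff_X_mul f 1
    have e1 : ((1 + C a * X) * f).coeff 1 = f.coeff 1 + a * f.coeff 0 := by
      rw [add_mul, one_mul, mul_assoc, coeff_add, coeff_C_mul, ex1]
    have e2 : ((1 + C a * X) * f).coeff 2 = f.coeff 2 + a * f.coeff 1 := by
      rw [add_mul, one_mul, mul_assoc, coeff_add, coeff_C_mul, ex2]
    refine ⟨by rw [e0, h0], by rw [e1, h1, h0]; ring, ?_⟩
    rw [e2]
    linear_combination h2 + 2 * a * h1

lemma sum_map_add_sq (a : ℝ) (s : Multiset ℝ) :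
    (s.map (fun x : ℝ => a ^ 2 + x ^ 2)).sum
      = (Multiset.card s : ℝ) * a ^ 2 + (s.map (fun x => x ^ 2)).sum := by
  induction s using Multiset.induction_on with
  | empty => simp
  | cons b u ihu =>
    simp only [Multiset.map_cons, Multiset.sum_cons, Multiset.card_cons]
    push_cast
    linarith [ihu]

lemma cs_multiset (t : Multiset ℝ) :
    t.sum ^ 2 ≤ (Multiset.card t : ℝ) * (t.map (fun x => x ^ 2)).sum := by
  induction t using Multiset.induction_on with
  | empty => simp
  | cons a s ih =>
    have key : 2 * a * s.sum ≤ (Multiset.card s : ℝ) * a ^ 2 + (s.map (fun x => x ^ 2)).sum := by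
      have h1 : (s.map (fun x => 2 * a * x)).sum ≤ (s.map (fun x => a ^ 2 + x ^ 2)).sum := by
        apply Multiset.sum_map_le_sum_map
        intro x _; nlinarith [sq_nonneg (a - x)]
      have h2 : (s.map (fun x => 2 * a * x)).sum = 2 * a * s.sum := by
        rw [show (fun x : ℝ => 2 * a * x) = (fun x => 2 * a * id x) from rfl,
          Multiset.sum_map_mul_left]; simp
      rw [h2, sum_map_add_sq] at h1; exact h1
    simp only [Multiset.sum_cons, Multiset.map_cons, Multiset.card_cons]
    push_cast
    nlinarith [ih]

lemma prod_factor (s : Multiset ℝ) (hs : ∀ x ∈ s, x ≠ 0) :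
    (s.map fun a => X - C a).prod
      = C ((s.map (fun a => -a)).prod) *
        ((s.map (fun a => -a⁻¹)).map (fun a => (1 : ℝ[X]) + C a * X)).prod := by
  induction s using Multiset.induction_on with
  | empty => simp
  | cons a u ih =>
    have ha : a ≠ 0 := hs a (Multiset.mem_cons_self a u)
    have ih' := ih (fun x hx => hs x (Multiset.mem_cons_of_mem hx))
    simp only [Multiset.map_cons, Multiset.prod_cons, ih']
    have key : (X - C a) = C (-a) * (1 + C (-a⁻¹) * X) := by
      rw [mul_add, mul_one, ← mul_assoc, ← C_mul]
      have : (-a) * -a⁻¹ = 1 := by field_simp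
      rw [this, C_1, one_mul, map_neg]
      ring
    rw [key, map_mul]
    ring


/-- If a real polynomial of degree `m ≥ 2` with positive coefficients `b₀, b₁, b₂` has only
real negative zeros, then `b₁²/(b₀b₂) ≥ 2m/(m−1)`. -/
theorem newton_type_inequality (p : Polynomial ℝ) (m : ℕ) (hm : 2 ≤ m)
    (hdeg : p.natDegree = m)
    (hreal : RealRooted p) (hneg : ∀ x ∈ p.roots, x < 0)
    (hb0 : 0 < p.coeff 0) (hb1 : 0 < p.coeff 1) (hb2 : 0 < p.coeff 2) :
    2 * (m : ℝ) / ((m : ℝ) - 1) ≤ (p.coeff 1) ^ 2 / (p.coeff 0 * p.coeff 2) := by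
  have hcard : Multiset.card p.roots = p.natDegree := hreal
  have hfact := Polynomial.C_leadingCoeff_mul_prod_multiset_X_sub_C hcard
  have hs : ∀ x ∈ p.roots, x ≠ 0 := fun x hx => ne_of_lt (hneg x hx)
  set t : Multiset ℝ := p.roots.map (fun a => -a⁻¹) with ht
  set c : ℝ := p.leadingCoeff * (p.roots.map (fun a => -a)).prod with hc
  have hp : p = C c * (t.map (fun a => (1 : ℝ[X]) + C a * X)).prod := by
    rw [← hfact, prod_factor _ hs, ← mul_assoc, ← C_mul]
  obtain ⟨q0, q1, q2⟩ := aux_coeffs t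
  set T := t.sum with hT
  set Q := (t.map (fun x => x ^ 2)).sum with hQ
  have e0 : p.coeff 0 = c := by rw [hp, coeff_C_mul, q0, mul_one]
  have e1 : p.coeff 1 = c * T := by rw [hp, coeff_C_mul, q1]
  have e2 : 2 * p.coeff 2 = c * (T ^ 2 - Q) := by
    rw [hp, coeff_C_mul]; linear_combination c * q2
  have hcardt : (Multiset.card t : ℝ) = (m : ℝ) := by
    rw [ht, Multiset.card_map, hcard, hdeg]
  have hcs : T ^ 2 ≤ (m : ℝ) * Q := by
    have := cs_multiset t; rwa [hcardt] at this
  have hm' : (2 : ℝ) ≤ (m : ℝ) := by exact_mod_cast hm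
  have key : 2 * (p.coeff 0 * p.coeff 2) = c ^ 2 * (T ^ 2 - Q) := by
    rw [e0]; linear_combination c * e2
  have hb1sq : p.coeff 1 ^ 2 = c ^ 2 * T ^ 2 := by rw [e1]; ring
  rw [div_le_div_iff₀ (by linarith) (by positivity)]
  nlinarith [mul_nonneg (sq_nonneg c) (sub_nonneg.2 hcs), key, hb1sq, hb0, hb2]
end

section
/- Let p(x) and q(x) be real polynomials with only negative zeros and p(0) > 0, q(0) > 0. If the pair (p(x), x·q(x)) is real — i.e., A·p(x) + B·x·q(x) has only real zeros for all real A, B — then for all A, B, C, D > 0 the polynomials A·p(x) + B·x·q(x) and C·p(x) + D·q(x) have only real zeros. -/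
open Polynomial

/-! Since `(p, X q)` is a real pair, `z q(z) / p(z)` is never real off the real axis, so by
connectedness it maps the upper half-plane into itself, as it does near `0`, where it is close
to `z q(0) / p(0)`. A zero of `c p + d q` in the upper half-plane would instead give
`z q(z) / p(z) = -(c / d) z`. To avoid dividing, everything is phrased through
`Im (z q(z) conj p(z)) = |p(z)|² Im (z q(z) / p(z))`. -/

open ComplexConjugate

theorem realRooted_of_forall_im_pos_aeval_ne_zero {f : ℝ[X]}
    (h : ∀ z : ℂ, 0 < z.im → aeval z f ≠ 0) : RealRooted f := by
  refine splits_iff_card_roots.mp <| (IsAlgClosed.splits _).of_splits_map (algebraMap ℝ ℂ)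
    fun z hz ↦ ⟨z.re, Complex.ext rfl ?_⟩
  have hroot : aeval z f = 0 := by
    rw [aeval_def, eval₂_eq_eval_map]
    exact (mem_roots'.mp hz).2
  rcases lt_trichotomy z.im 0 with hneg | hzero | hpos
  · exact absurd (by rw [aeval_conj, hroot, map_zero]) (h (conj z) (by simpa using hneg))
  · simpa using hzero.symm
  · exact absurd hroot (h z hpos)

theorem RealRooted.aeval_ne_zero {f : ℝ[X]} (hf : RealRooted f) (hf0 : f ≠ 0) {z : ℂ}
    (hz : z.im ≠ 0) : aeval z f ≠ 0 := by
  intro hroot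
  obtain ⟨x, rfl⟩ := (splits_iff_card_roots.mpr hf).mem_range_of_isRoot hf0
    (i := algebraMap ℝ ℂ) (by rwa [IsRoot, ← eval₂_eq_eval_map, ← aeval_def])
  simp at hz

theorem RealPair.realRooted_left {g h : ℝ[X]} (hgh : RealPair g h) : RealRooted g := by
  simpa using hgh 1 0

theorem IsPreconnected.pos_of_ne_zero {α : Type*} [TopologicalSpace α] {s : Set α}
    (hs : IsPreconnected s) {f : α → ℝ} (hf : ContinuousOn f s) (hf0 : ∀ x ∈ s, f x ≠ 0)
    {a : α} (ha : a ∈ s) (hfa : 0 < f a) {x : α} (hx : x ∈ s) : 0 < f x := by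
  by_contra! hfx
  obtain ⟨y, hy, hfy⟩ := hs.intermediate_value hx ha hf ⟨hfx, hfa.le⟩
  exact hf0 y hy hfy

/-- A real value `r = h(z) / g(z)` at a non-real `z` would make `z` a non-real zero of
`r • g - h`. -/
theorem RealPair.im_aeval_mul_conj_ne_zero {g h : ℝ[X]} (hgh : RealPair g h)
    (hind : LinearIndependent ℝ ![g, h]) {z : ℂ} (hz : z.im ≠ 0) :
    (aeval z h * conj (aeval z g)).im ≠ 0 := by
  intro him
  have hg0 : g ≠ 0 := hind.ne_zero 0
  have hgz : aeval z g ≠ 0 := hgh.realRooted_left.aeval_ne_zero hg0 hz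
  set w := aeval z h * conj (aeval z g)
  set N := Complex.normSq (aeval z g)
  have hN : N ≠ 0 := by simpa [N] using hgz
  have hw : w = (w.re : ℂ) := Complex.ext rfl (by simpa using him)
  have hcomb : C w.re * g + C (-N) * h ≠ 0 := by
    intro h0
    have hcoeffs := LinearIndependent.pair_iff.mp hind w.re (-N) (by simpa [smul_eq_C_mul] using h0)
    exact hN (neg_eq_zero.mp hcoeffs.2)
  refine (hgh w.re (-N)).aeval_ne_zero hcomb hz ?_
  have hNz : (N : ℂ) = aeval z g * conj (aeval z g) := (Complex.mul_conj _).symm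
  simp only [map_add, map_mul, aeval_C, Complex.coe_algebraMap, map_neg]
  rw [← hw, hNz]
  ring

section

variable {p q : ℝ[X]}

theorem linearIndependent_pair_X_mul (hp0 : p.eval 0 ≠ 0) (hq : q ≠ 0) :
    LinearIndependent ℝ ![p, X * q] := by
  refine LinearIndependent.pair_iff.mpr fun s t hst ↦ ?_
  have hs : s = 0 := by
    simpa [hp0] using congrArg (eval 0) hst
  subst hs
  simpa [hq, X_ne_zero] using hst

theorem exists_im_pos_im_mul_aeval_mul_conj_pos (hpq : 0 < q.eval 0 * p.eval 0) :
    ∃ z : ℂ, 0 < z.im ∧ 0 < (z * aeval z q * conj (aeval z p)).im := by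
  set f : ℝ → ℝ := fun t ↦ (aeval (t * Complex.I) q * conj (aeval (t * Complex.I) p)).re
  have hf : Continuous f := by fun_prop
  have hf0 : 0 < f 0 := by
    simpa [f, ← coeff_zero_eq_aeval_zero', coeff_zero_eq_eval_zero] using hpq
  obtain ⟨t, hft, ht⟩ := ((hf.continuousAt.eventually (eventually_gt_nhds hf0)).filter_mono
    nhdsWithin_le_nhds |>.and (self_mem_nhdsWithin (s := Set.Ioi 0))).exists
  refine ⟨t * Complex.I, by simpa using ht, ?_⟩
  simpa [f, mul_assoc, Complex.mul_im] using mul_pos (Set.mem_Ioi.mp ht) hft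

theorem im_mul_aeval_mul_conj_nonpos {c d : ℝ} (hc : 0 ≤ c) (hd : 0 < d) {z : ℂ}
    (hz : 0 ≤ z.im) (hroot : aeval z (C c * p + C d * q) = 0) :
    (z * aeval z q * conj (aeval z p)).im ≤ 0 := by
  have hq : (d : ℂ) * aeval z q = -c * aeval z p := by
    simpa [add_eq_zero_iff_eq_neg'] using hroot
  have hdG : d * (z * aeval z q * conj (aeval z p)).im = -c * Complex.normSq (aeval z p) * z.im :=
    calc d * (z * aeval z q * conj (aeval z p)).im
        = ((d : ℂ) * (z * aeval z q * conj (aeval z p))).im := (Complex.im_ofReal_mul ..).symm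
      _ = (((-c * Complex.normSq (aeval z p) : ℝ) : ℂ) * z).im := by
        congr 1
        push_cast
        rw [← Complex.mul_conj]
        linear_combination (z * conj (aeval z p) : ℂ) * hq
      _ = -c * Complex.normSq (aeval z p) * z.im := Complex.im_ofReal_mul ..
  refine nonpos_of_mul_nonpos_right ?_ hd
  rw [hdG]
  exact mul_nonpos_of_nonpos_of_nonneg
    (mul_nonpos_of_nonpos_of_nonneg (neg_nonpos.mpr hc) (Complex.normSq_nonneg _)) hz

theorem im_mul_aeval_mul_conj_pos (hpair : RealPair p (X * q))
    (hpq : 0 < q.eval 0 * p.eval 0) {z : ℂ} (hz : 0 < z.im) :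
    0 < (z * aeval z q * conj (aeval z p)).im := by
  have hind : LinearIndependent ℝ ![p, X * q] :=
    linearIndependent_pair_X_mul (right_ne_zero_of_mul hpq.ne')
      fun hq ↦ by simp [hq] at hpq
  obtain ⟨z₀, hz₀, hG₀⟩ := exists_im_pos_im_mul_aeval_mul_conj_pos hpq
  refine (convex_halfSpace_im_gt 0).isPreconnected.pos_of_ne_zero
    (f := fun w ↦ (w * aeval w q * conj (aeval w p)).im) (by fun_prop)
    (fun w hw ↦ ?_) hz₀ hG₀ hz
  simpa [mul_assoc] using hpair.im_aeval_mul_conj_ne_zero hind (ne_of_gt hw)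

end

theorem real_pair_combinations_general (p q : Polynomial ℝ)
    (hp0 : 0 < p.eval 0) (hq0 : 0 < q.eval 0)
    (hpair : ∀ A B : ℝ, RealRooted (C A * p + C B * X * q)) :
    ∀ a b c d : ℝ, 0 < a → 0 < b → 0 < c → 0 < d →
      RealRooted (C a * p + C b * X * q) ∧ RealRooted (C c * p + C d * q) := by
  intro a b c d _ _ hc hd
  have hreal : RealPair p (X * q) := fun A B ↦ by simpa only [mul_assoc] using hpair A B
  refine ⟨hpair a b, realRooted_of_forall_im_pos_aeval_ne_zero fun z hz hroot ↦ ?_⟩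
  exact (im_mul_aeval_mul_conj_nonpos hc.le hd hz.le hroot).not_gt
    (im_mul_aeval_mul_conj_pos hreal (mul_pos hq0 hp0) hz)

/-- If `(p, x·q)` is a real pair (with `p, q` having only negative zeros and positive values
at the origin), then all positive combinations `a·p + b·x·q` and `c·p + d·q` have only real
zeros. -/
theorem real_pair_combinations (p q : Polynomial ℝ)
    (hp : RealRooted p) (hq : RealRooted q)
    (hpneg : ∀ x ∈ p.roots, x < 0) (hqneg : ∀ x ∈ q.roots, x < 0)
    (hp0 : 0 < p.eval 0) (hq0 : 0 < q.eval 0)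
    (hpair : ∀ A B : ℝ, RealRooted (C A * p + C B * X * q)) :
    ∀ a b c d : ℝ, 0 < a → 0 < b → 0 < c → 0 < d →
      RealRooted (C a * p + C b * X * q) ∧ RealRooted (C c * p + C d * q) :=
  real_pair_combinations_general p q hp0 hq0 hpair
end

section
/- Let p(x) and q(x) be real polynomials with only negative zeros, p(0) > 0, q(0) > 0, and suppose that for all A, B, C, D > 0 the polynomials A·p(x) + B·x·q(x) and C·p(x) + D·q(x) have only real zeros. Then (p(x), x·q(x)) is a real pair, i.e., the zeros of p(x) and x·q(x) interlace non-strictly. -/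
open Polynomial

/-!
Put `argSum M z = ∑_{t ∈ M} arg (z - t)`, a continuous argument of `∏_{t ∈ M} (z - t)` on
the upper half-plane `H`. If `f`, `g` have only real zeros and no
positive combination `c f + g` vanishes on `H`, then `g / f` takes no negative real value on `H`,
so the continuous phase `argSum g.roots - argSum f.roots` never reaches `±π`; it is close to `0`
above a real point to the right of all zeros, hence it stays in `(-π, π)` on the connected set
`H`. Letting `z` tend to a real point `x` shows that the numbers of zeros of `f` and `g` to the
right of `x` differ by at most one. For `(p, q)` and `(p, x q)` this is the interlacing of the
zeros, and since `t ↦ arg (z - t)` is increasing it forces `0 < argSum (x q) - argSum p < π`: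
`x q / p` maps `H` into itself, so no real combination `a p + b x q` vanishes off the real axis.
-/

open scoped Real
open Filter Topology

namespace Multiset

variable {α : Type*} [LinearOrder α] [DenselyOrdered α] [NoMinOrder α]

theorem exists_lt_forall_lt_of_forall_lt {M : Multiset α} {a : α} (h : ∀ t ∈ M, t < a) :
    ∃ m < a, ∀ t ∈ M, t < m := by
  induction M using Multiset.induction with
  | empty => simpa using exists_lt a
  | cons t M ih =>
    obtain ⟨m, hma, hm⟩ := ih fun s hs => h s (mem_cons_of_mem hs)
    obtain ⟨m', hm', hm'a⟩ := exists_between (max_lt (h t (mem_cons_self t M)) hma)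
    refine ⟨m', hm'a, fun s hs => ?_⟩
    rcases mem_cons.1 hs with rfl | hs
    · exact (le_max_left _ _).trans_lt hm'
    · exact (hm s hs).trans ((le_max_right _ _).trans_lt hm')

theorem sum_map_le_sum_map_of_countP_le {θ : α → ℝ} (hθ : Monotone θ)
    (hθ0 : ∀ t, 0 ≤ θ t) {A B : Multiset α}
    (h : ∀ x, x ∉ A → x ∉ B → B.countP (x < ·) ≤ A.countP (x < ·)) :
    (B.map θ).sum ≤ (A.map θ).sum := by
  induction B using Multiset.strongInductionOn generalizing A with
  | ih B ih =>
  rcases eq_or_ne B 0 with rfl | hB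
  · simpa using sum_nonneg fun _ ht => by
      obtain ⟨t, -, rfl⟩ := mem_map.1 ht; exact hθ0 t
  obtain ⟨b, hbB, hbmax⟩ := exists_max_image id hB
  -- Pair the largest element `b` of `B` with some `a ≥ b` in `A`: without one, the
  -- hypothesis would fail just below `b`.
  obtain ⟨a, haA, hba⟩ : ∃ a ∈ A, b ≤ a := by
    by_contra! hA
    obtain ⟨m, hmb, hm⟩ := exists_lt_forall_lt_of_forall_lt
      (M := A + B.filter (· < b)) (a := b) (by simpa [or_imp, forall_and] using hA)
    have hcount := h m (fun hmA => (hm m (by simp [hmA])).false) fun hmB =>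
      (hm m (by simp [hmB, hmb])).false
    have hA0 : A.countP (m < ·) = 0 := countP_eq_zero.2 fun t ht =>
      not_lt.2 (hm t (by simp [ht])).le
    have hB0 : 0 < B.countP (m < ·) := countP_pos_of_mem hbB hmb
    omega
  rw [← cons_erase haA, ← cons_erase hbB, map_cons, map_cons,
    sum_cons, sum_cons]
  refine add_le_add (hθ hba) (ih _ (erase_lt.2 hbB) fun x hxA hxB => ?_)
  by_cases hxb : b ≤ x
  · have : (B.erase b).countP (x < ·) = 0 := countP_eq_zero.2 fun t ht =>
      not_lt.2 ((hbmax t (mem_of_mem_erase ht)).trans hxb)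
    omega
  replace hxb := not_le.1 hxb
  have hxa : x < a := hxb.trans_le hba
  have hcount := h x (fun hx => hxA ((mem_erase_of_ne hxa.ne).2 hx))
    fun hx => hxB ((mem_erase_of_ne hxb.ne).2 hx)
  rw [← cons_erase haA, ← cons_erase hbB, countP_cons_of_pos _ hxa,
    countP_cons_of_pos _ hxb] at hcount
  exact Nat.succ_le_succ_iff.1 hcount

end Multiset

theorem Complex.arg_sub_ofReal {z : ℂ} (hz : 0 < z.im) (t : ℝ) :
    Complex.arg (z - t) = π / 2 + Real.arctan ((t - z.re) / z.im) := by
  have hw : 0 < (z - t).im := by simpa using hz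
  have hsqrt : √(1 + ((t - z.re) / z.im) ^ 2) = ‖z - t‖ / z.im := by
    rw [← Real.sqrt_sq (div_nonneg (norm_nonneg _) hz.le), div_pow (‖z - t‖), Complex.sq_norm,
      Complex.normSq_apply]
    congr 1
    field_simp
    simp only [Complex.sub_re, Complex.ofReal_re, Complex.sub_im, Complex.ofReal_im, sub_zero]
    ring
  rw [Complex.arg_of_im_pos hw, Real.arccos_eq_pi_div_two_sub_arcsin, sub_eq_add_neg,
    ← Real.arcsin_neg, ← neg_div, Real.arctan_eq_arcsin, hsqrt]
  congr 2
  field_simp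
  simp only [Complex.sub_re, Complex.ofReal_re]
  ring

theorem Complex.strictMono_arg_sub_ofReal {z : ℂ} (hz : 0 < z.im) :
    StrictMono fun t : ℝ => Complex.arg (z - t) := fun s t hst => by
  simp only [Complex.arg_sub_ofReal hz]
  gcongr

theorem Complex.tendsto_arg_sub_ofReal {x t : ℝ} (hxt : x ≠ t) :
    Tendsto (fun y : ℝ => Complex.arg (x + y * Complex.I - t)) (𝓝[>] 0)
      (𝓝 (π * if x < t then 1 else 0)) := by
  have hformula : (fun y : ℝ => π / 2 + Real.arctan ((t - x) * y⁻¹)) =ᶠ[𝓝[>] 0]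
      fun y => Complex.arg (x + y * Complex.I - t) := by
    filter_upwards [self_mem_nhdsWithin] with y hy
    rw [Complex.arg_sub_ofReal (by simpa using hy)]
    simp [div_eq_mul_inv]
  refine Tendsto.congr' hformula ?_
  split_ifs with h
  · have := (Real.tendsto_arctan_atTop.mono_right nhdsWithin_le_nhds).comp
      (tendsto_inv_nhdsGT_zero.const_mul_atTop (sub_pos.2 h))
    rw [show π * 1 = π / 2 + π / 2 by ring]
    exact this.const_add _
  · have := (Real.tendsto_arctan_atBot.mono_right nhdsWithin_le_nhds).comp
      (tendsto_inv_nhdsGT_zero.const_mul_atTop_of_neg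
        (sub_neg.2 (lt_of_le_of_ne (not_lt.1 h) hxt.symm)))
    rw [show π * 0 = π / 2 + -(π / 2) by ring]
    exact this.const_add _

theorem Polynomial.Splits.aeval_eq_leadingCoeff_mul_prod {f : ℝ[X]} (hf : f.Splits) (z : ℂ) :
    aeval z f = f.leadingCoeff * (f.roots.map fun t : ℝ => z - t).prod := by
  conv_lhs => rw [hf.eq_prod_roots]
  simp [map_multiset_prod, Multiset.map_map]

theorem Polynomial.Splits.aeval_ne_zero_of_im_ne_zero {f : ℝ[X]} (hf : f.Splits) (hf0 : f ≠ 0)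
    {z : ℂ} (hz : z.im ≠ 0) : aeval z f ≠ 0 := by
  rw [hf.aeval_eq_leadingCoeff_mul_prod]
  refine mul_ne_zero (by simpa using hf0) (Multiset.prod_ne_zero fun h0 => ?_)
  obtain ⟨t, -, ht⟩ := Multiset.mem_map.1 h0
  exact hz (by simpa using congrArg Complex.im ht)

theorem Polynomial.splits_of_forall_im_pos_aeval_ne_zero {f : ℝ[X]}
    (h : ∀ z : ℂ, 0 < z.im → aeval z f ≠ 0) : f.Splits := by
  refine Splits.of_splits_map_of_injective (algebraMap ℝ ℂ).injective (IsAlgClosed.splits _)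
    fun z hz => ⟨z.re, Complex.ext (by simp) ?_⟩
  have hroot : aeval z f = 0 := by simpa [aeval_def, eval_map] using (mem_roots'.1 hz).2
  rcases lt_trichotomy z.im 0 with hlt | heq | hgt
  · refine absurd ?_ (h (starRingEnd ℂ z) (by simpa using hlt))
    rw [aeval_conj, hroot, map_zero]
  · simp [heq]
  · exact absurd hroot (h z hgt)

theorem Polynomial.Splits.leadingCoeff_pos_of_forall_roots_neg {f : ℝ[X]} (hf : f.Splits)
    (hneg : ∀ t ∈ f.roots, t < 0) (h0 : 0 < f.eval 0) : 0 < f.leadingCoeff := by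
  rw [hf.eval_eq_prod_roots] at h0
  refine pos_of_mul_pos_left h0 (Multiset.prod_nonneg fun u hu => ?_)
  obtain ⟨t, ht, rfl⟩ := Multiset.mem_map.1 hu
  linarith [hneg t ht]

noncomputable def argSum (M : Multiset ℝ) (z : ℂ) : ℝ :=
  (M.map fun t : ℝ => Complex.arg (z - t)).sum

@[simp]
theorem argSum_zero (z : ℂ) : argSum 0 z = 0 := rfl

@[simp]
theorem argSum_cons (t : ℝ) (M : Multiset ℝ) (z : ℂ) :
    argSum (t ::ₘ M) z = Complex.arg (z - t) + argSum M z := by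
  simp [argSum]

theorem prod_sub_eq_norm_mul_exp_argSum (M : Multiset ℝ) (z : ℂ) :
    (M.map fun t : ℝ => z - t).prod =
      ‖(M.map fun t : ℝ => z - t).prod‖ * Complex.exp (argSum M z * Complex.I) := by
  induction M using Multiset.induction with
  | empty => simp
  | cons t M ih =>
    simp only [Multiset.map_cons, Multiset.prod_cons, argSum_cons, norm_mul, Complex.ofReal_add,
      add_mul, Complex.exp_add, Complex.ofReal_mul]
    conv_lhs => rw [ih, ← Complex.norm_mul_exp_arg_mul_I (z - t)]
    ring

theorem Polynomial.Splits.aeval_eq_norm_mul_exp_argSum {f : ℝ[X]} (hf : f.Splits)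
    (hlc : 0 < f.leadingCoeff) (z : ℂ) :
    aeval z f = ‖aeval z f‖ * Complex.exp (argSum f.roots z * Complex.I) := by
  rw [hf.aeval_eq_leadingCoeff_mul_prod, norm_mul, Complex.norm_real, Real.norm_of_nonneg hlc.le]
  conv_lhs => rw [prod_sub_eq_norm_mul_exp_argSum]
  push_cast
  ring

theorem Polynomial.Splits.aeval_div_eq_norm_mul_exp {f g : ℝ[X]} (hf : f.Splits) (hg : g.Splits)
    (hlf : 0 < f.leadingCoeff) (hlg : 0 < g.leadingCoeff) (z : ℂ) :
    aeval z g / aeval z f = ‖aeval z g / aeval z f‖ *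
      Complex.exp ((argSum g.roots z - argSum f.roots z : ℝ) * Complex.I) := by
  conv_lhs => rw [hg.aeval_eq_norm_mul_exp_argSum hlg, hf.aeval_eq_norm_mul_exp_argSum hlf]
  rw [norm_div, Complex.ofReal_div, Complex.ofReal_sub, sub_mul, Complex.exp_sub]
  ring

theorem continuousOn_argSum (M : Multiset ℝ) : ContinuousOn (argSum M) {z : ℂ | 0 < z.im} := by
  induction M using Multiset.induction with
  | empty => exact continuousOn_const
  | cons t M ih =>
    refine ContinuousOn.congr (f := fun z => Complex.arg (z - t) + argSum M z)
      (ContinuousOn.add (fun z hz => ?_) ih) fun z _ => argSum_cons t M z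
    have : z - t ∈ Complex.slitPlane :=
      Complex.mem_slitPlane_iff.2 (Or.inr (by simpa using hz.ne'))
    exact ((Complex.continuousAt_arg this).comp (f := fun w : ℂ => w - (t : ℂ))
      (continuousAt_id.sub continuousAt_const)).continuousWithinAt

theorem tendsto_argSum {M : Multiset ℝ} {x : ℝ} (hx : x ∉ M) :
    Tendsto (fun y : ℝ => argSum M (x + y * Complex.I)) (𝓝[>] 0)
      (𝓝 (π * M.countP (x < ·))) := by
  induction M using Multiset.induction with
  | empty => simp
  | cons t M ih =>
    rw [Multiset.mem_cons, not_or] at hx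
    simp only [argSum_cons, Multiset.countP_cons]
    convert (Complex.tendsto_arg_sub_ofReal hx.1).add (ih hx.2) using 2
    push_cast
    ring

theorem tendsto_argSum_of_forall_lt {M : Multiset ℝ} {x : ℝ} (hx : ∀ t ∈ M, t < x) :
    Tendsto (fun y : ℝ => argSum M (x + y * Complex.I)) (𝓝[>] 0) (𝓝 0) := by
  simpa [Multiset.countP_eq_zero.2 fun t ht => not_lt.2 (hx t ht).le] using
    tendsto_argSum fun hxM => (hx x hxM).false

theorem abs_argSum_sub_lt_pi {f g : ℝ[X]} (hf : f.Splits) (hg : g.Splits)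
    (hlf : 0 < f.leadingCoeff) (hlg : 0 < g.leadingCoeff)
    (hfg : ∀ c : ℝ, 0 < c → ∀ z : ℂ, 0 < z.im → aeval z (C c * f + g) ≠ 0)
    {z : ℂ} (hz : 0 < z.im) : |argSum g.roots z - argSum f.roots z| < π := by
  set F := fun w => |argSum g.roots w - argSum f.roots w|
  have hcont : ContinuousOn F {w : ℂ | 0 < w.im} :=
    ((continuousOn_argSum _).sub (continuousOn_argSum _)).abs
  have hne : ∀ w : ℂ, 0 < w.im → F w ≠ π := by
    intro w hw hFw
    have hfw := hf.aeval_ne_zero_of_im_ne_zero (leadingCoeff_ne_zero.1 hlf.ne') hw.ne'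
    have hgw := hg.aeval_ne_zero_of_im_ne_zero (leadingCoeff_ne_zero.1 hlg.ne') hw.ne'
    have hexp : Complex.exp ((argSum g.roots w - argSum f.roots w : ℝ) * Complex.I) = -1 := by
      rcases (abs_eq Real.pi_pos.le).1 hFw with h | h <;> simp [h, Complex.exp_neg]
    have hdiv := hf.aeval_div_eq_norm_mul_exp hg hlf hlg w
    rw [hexp] at hdiv
    refine hfg _ (norm_pos_iff.2 (div_ne_zero hgw hfw)) w hw ?_
    rw [map_add, map_mul, aeval_C, Complex.coe_algebraMap]
    field_simp at hdiv
    linear_combination hdiv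
  obtain ⟨z₀, hz₀, hFz₀⟩ : ∃ z₀ : ℂ, 0 < z₀.im ∧ F z₀ < π := by
    obtain ⟨b, hb⟩ := (f.roots + g.roots).toFinset.exists_le
    have hlt {M} (hM : M ≤ f.roots + g.roots) : ∀ t ∈ M, t < b + 1 := fun t ht =>
      (hb t (by simpa using Multiset.mem_of_le hM ht)).trans_lt (lt_add_one b)
    have hlim : Tendsto (fun y : ℝ => F (b + 1 + y * Complex.I)) (𝓝[>] 0) (𝓝 0) := by
      simpa using ((tendsto_argSum_of_forall_lt (hlt (Multiset.le_add_left _ _))).sub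
        (tendsto_argSum_of_forall_lt (hlt (Multiset.le_add_right _ _)))).abs
    obtain ⟨y, hy, hypos⟩ :=
      ((hlim.eventually (gt_mem_nhds Real.pi_pos)).and self_mem_nhdsWithin).exists
    exact ⟨_, by simpa using hypos, hy⟩
  by_contra! h
  obtain ⟨w, hw, hFw⟩ :=
    (convex_halfSpace_im_gt 0).isPreconnected.intermediate_value hz₀ hz hcont ⟨hFz₀.le, h⟩
  exact hne w hw hFw

theorem countP_roots_lt_le_add_one {f g : ℝ[X]} (hf : f.Splits) (hg : g.Splits)
    (hlf : 0 < f.leadingCoeff) (hlg : 0 < g.leadingCoeff)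
    (hfg : ∀ c : ℝ, 0 < c → ∀ z : ℂ, 0 < z.im → aeval z (C c * f + g) ≠ 0)
    {x : ℝ} (hxf : x ∉ f.roots) (hxg : x ∉ g.roots) :
    g.roots.countP (x < ·) ≤ f.roots.countP (x < ·) + 1 ∧
      f.roots.countP (x < ·) ≤ g.roots.countP (x < ·) + 1 := by
  have hle : |π * g.roots.countP (x < ·) - π * f.roots.countP (x < ·)| ≤ π := by
    refine le_of_tendsto ((tendsto_argSum hxg).sub (tendsto_argSum hxf)).abs ?_
    filter_upwards [self_mem_nhdsWithin] with y hy
    exact (abs_argSum_sub_lt_pi hf hg hlf hlg hfg (by simpa using hy)).le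
  rw [← mul_sub, abs_mul, abs_of_pos Real.pi_pos, mul_le_iff_le_one_right Real.pi_pos,
    abs_le] at hle
  constructor
  · have : (g.roots.countP (x < ·) : ℝ) ≤ f.roots.countP (x < ·) + 1 := by linarith
    exact_mod_cast this
  · have : (f.roots.countP (x < ·) : ℝ) ≤ g.roots.countP (x < ·) + 1 := by linarith
    exact_mod_cast this

theorem argSum_cons_zero_sub_mem_Ioo {R S : Multiset ℝ} (hR : ∀ r ∈ R, r < 0)
    (hS : ∀ s ∈ S, s < 0)
    (hRS : ∀ x, x ∉ R → x ∉ S → R.countP (x < ·) ≤ S.countP (x < ·) + 1)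
    (hSR : ∀ x, x ∉ R → x ∉ 0 ::ₘ S →
      (0 ::ₘ S).countP (x < ·) ≤ R.countP (x < ·) + 1)
    {z : ℂ} (hz : 0 < z.im) : argSum (0 ::ₘ S) z - argSum R z ∈ Set.Ioo 0 π := by
  have hmono := Complex.strictMono_arg_sub_ofReal hz
  have hnonneg : ∀ t : ℝ, 0 ≤ Complex.arg (z - t) := fun t =>
    Complex.arg_nonneg_iff.2 (by simpa using hz.le)
  have hS_le : argSum S z ≤ argSum R z := by
    refine Multiset.sum_map_le_sum_map_of_countP_le (A := R) (B := S) hmono.monotone hnonneg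
      fun x hxR hxS => ?_
    by_cases hx : x < 0
    · simpa [Multiset.countP_cons_of_pos _ hx] using hSR x hxR (by simp [hx.ne, hxS])
    · simp [Multiset.countP_eq_zero.2 fun s hs => not_lt.2 ((hS s hs).le.trans (not_lt.1 hx))]
  -- A point `m` strictly between the zeros in `R` and `0` makes the lower bound strict.
  obtain ⟨m, hm0, hRm⟩ := Multiset.exists_lt_forall_lt_of_forall_lt hR
  have hR_le : argSum R z ≤ argSum (m ::ₘ S) z := by
    refine Multiset.sum_map_le_sum_map_of_countP_le (A := m ::ₘ S) (B := R) hmono.monotone hnonneg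
      fun x hxS hxR => ?_
    by_cases hx : x < m
    · simpa [Multiset.countP_cons_of_pos _ hx] using
        hRS x hxR fun h => hxS (Multiset.mem_cons_of_mem h)
    · simp [Multiset.countP_eq_zero.2 fun r hr => not_lt.2 ((hRm r hr).le.trans (not_lt.1 hx))]
  have hm := hmono hm0
  have hπ : Complex.arg (z - (0 : ℝ)) < π :=
    Complex.arg_lt_pi_iff.2 (Or.inr (by simpa using hz.ne'))
  rw [argSum_cons] at hR_le ⊢
  constructor <;> linarith

theorem Polynomial.Splits.im_aeval_div_pos {f g : ℝ[X]} (hf : f.Splits) (hg : g.Splits)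
    (hlf : 0 < f.leadingCoeff) (hlg : 0 < g.leadingCoeff) {z : ℂ} (hz : 0 < z.im)
    (harg : argSum g.roots z - argSum f.roots z ∈ Set.Ioo 0 π) :
    0 < (aeval z g / aeval z f).im := by
  have hfz := hf.aeval_ne_zero_of_im_ne_zero (leadingCoeff_ne_zero.1 hlf.ne') hz.ne'
  have hgz := hg.aeval_ne_zero_of_im_ne_zero (leadingCoeff_ne_zero.1 hlg.ne') hz.ne'
  rw [hf.aeval_div_eq_norm_mul_exp hg hlf hlg, Complex.im_ofReal_mul,
    Complex.exp_ofReal_mul_I_im]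
  exact mul_pos (norm_pos_iff.2 (div_ne_zero hgz hfz))
    (Real.sin_pos_of_pos_of_lt_pi harg.1 harg.2)

theorem realPair_of_forall_im_aeval_div_pos {f g : ℝ[X]}
    (h : ∀ z : ℂ, 0 < z.im → 0 < (aeval z g / aeval z f).im) : RealPair f g := by
  intro a b
  rw [RealRooted, ← splits_iff_card_roots]
  by_cases hab : a = 0 ∧ b = 0
  · simp [hab.1, hab.2]
  refine splits_of_forall_im_pos_aeval_ne_zero fun z hz => ?_
  have hfz : aeval z f ≠ 0 := fun h0 => by simpa [h0] using h z hz
  have hcomb : aeval z (C a * f + C b * g) = aeval z f * (a + b * (aeval z g / aeval z f)) := by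
    rw [map_add, map_mul, map_mul, aeval_C, aeval_C, Complex.coe_algebraMap]
    field_simp
  rw [hcomb]
  refine mul_ne_zero hfz fun h0 => ?_
  have him : b * (aeval z g / aeval z f).im = 0 := by simpa using congrArg Complex.im h0
  rcases mul_eq_zero.1 him with rfl | him
  · exact hab ⟨by simpa using h0, rfl⟩
  · exact (h z hz).ne' him

/-- Conversely, if all positive combinations `a·p + b·x·q` and `c·p + d·q` have only real
zeros, then `(p, x·q)` is a real pair, i.e. the zeros of `p` and `x·q` interlace
non-strictly. -/
theorem combinations_imply_real_pair (p q : Polynomial ℝ)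
    (hp : RealRooted p) (hq : RealRooted q)
    (hpneg : ∀ x ∈ p.roots, x < 0) (hqneg : ∀ x ∈ q.roots, x < 0)
    (hp0 : 0 < p.eval 0) (hq0 : 0 < q.eval 0)
    (hcomb : ∀ a b c d : ℝ, 0 < a → 0 < b → 0 < c → 0 < d →
      RealRooted (C a * p + C b * X * q) ∧ RealRooted (C c * p + C d * q)) :
    RealPair p (X * q) := by
  have hpS : p.Splits := splits_iff_card_roots.2 hp
  have hqS : q.Splits := splits_iff_card_roots.2 hq
  have hXqS : (X * q).Splits := Splits.X.mul hqS
  have hlp := hpS.leadingCoeff_pos_of_forall_roots_neg hpneg hp0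
  have hlq := hqS.leadingCoeff_pos_of_forall_roots_neg hqneg hq0
  have hlXq : 0 < (X * q).leadingCoeff := by simpa using hlq
  have hXq : (X * q).roots = 0 ::ₘ q.roots := by
    rw [roots_mul (mul_ne_zero X_ne_zero (leadingCoeff_ne_zero.1 hlq.ne')), roots_X]
    rfl
  have nonvanishing (f : ℝ[X]) (hf : RealRooted f) (hf0 : 0 < f.eval 0) (z : ℂ)
      (hz : 0 < z.im) : aeval z f ≠ 0 :=
    (splits_iff_card_roots.2 hf).aeval_ne_zero_of_im_ne_zero (by rintro rfl; simp at hf0) hz.ne'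
  have hpXq (c : ℝ) (hc : 0 < c) : ∀ z : ℂ, 0 < z.im → aeval z (C c * p + X * q) ≠ 0 :=
    nonvanishing _ (by simpa using (hcomb c 1 1 1 hc one_pos one_pos one_pos).1)
      (by simpa using mul_pos hc hp0)
  have hpq (c : ℝ) (hc : 0 < c) : ∀ z : ℂ, 0 < z.im → aeval z (C c * p + q) ≠ 0 :=
    nonvanishing _ (by simpa using (hcomb 1 1 c 1 one_pos one_pos hc one_pos).2)
      (by simpa using add_pos (mul_pos hc hp0) hq0)
  refine realPair_of_forall_im_aeval_div_pos fun z hz =>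
    hpS.im_aeval_div_pos hXqS hlp hlXq hz ?_
  rw [hXq]
  refine argSum_cons_zero_sub_mem_Ioo hpneg hqneg
    (fun x hxp hxq => (countP_roots_lt_le_add_one hpS hqS hlp hlq hpq hxp hxq).2)
    (fun x hxp hxq => ?_) hz
  simpa [hXq] using
    (countP_roots_lt_le_add_one hpS hXqS hlp hlXq hpXq hxp (hXq ▸ hxq)).1
end

section
/- Conversely, let α > −1, n + α + β > 0, n ≥ 4. If the zeros of φ_n^{(α,β)} and φ_{n−1}^{(α,β)} are negative and interlace non-strictly, then φ_n^{(α,β−1)} has only real zeros. -/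
open Polynomial

/-!
The Jacobi polynomials satisfy the contiguous relation
`(2n+α+β) P_n^{(α,β-1)} = (n+α+β) P_n^{(α,β)} + (n+α) P_{n-1}^{(α,β)}`, which is checked
coefficientwise in the powers of `(1-x)/2` using only the shift rules of Pochhammer symbols.
Since `φ_n` is the image of `P_n` under the linear map `p ↦ Σ_k p^{(2k)}(1) μ^k` (the truncation
is irrelevant once it passes `deg p / 2`), the same relation holds for `φ`. Thus
`(2n+α+β) φ_n^{(α,β-1)}` is a real combination of the real pair `(φ_n^{(α,β)}, φ_{n-1}^{(α,β)})`,
and `2n+α+β > 0`.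
-/

theorem ascPochhammer_eval_add_one_mul (k : ℕ) (x : ℝ) :
    x * (ascPochhammer ℝ k).eval (x + 1) = (ascPochhammer ℝ k).eval x * (x + k) := by
  rw [← ascPochhammer_succ_eval]
  simp [ascPochhammer_succ_left, eval_comp]

theorem jacobiP_eq_sum_range (α β : ℝ) {n N : ℕ} (hN : n < N) :
    jacobiP α β n = ∑ k ∈ Finset.range N,
      C ((ascPochhammer ℝ n).eval (α + 1) / (n.factorial : ℝ) *
        ((ascPochhammer ℝ k).eval (-(n : ℝ)) * (ascPochhammer ℝ k).eval ((n : ℝ) + α + β + 1) /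
          ((k.factorial : ℝ) * (ascPochhammer ℝ k).eval (α + 1)))) *
        (C (1 / 2 : ℝ) * (1 - X)) ^ k := by
  rw [jacobiP, Finset.mul_sum]
  simp only [← mul_assoc, ← C_mul]
  refine Finset.sum_subset (Finset.range_subset_range.mpr hN) fun k _ hkn => ?_
  rw [Finset.mem_range, not_lt] at hkn
  simp [ascPochhammer_eval_neg_coe_nat_of_lt (Nat.lt_of_succ_le hkn)]

theorem jacobiP_contiguous (α β : ℝ) {n : ℕ} (hn : n ≠ 0) :
    C (2 * (n : ℝ) + α + β) * jacobiP α (β - 1) n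
      = C ((n : ℝ) + α + β) * jacobiP α β n + C ((n : ℝ) + α) * jacobiP α β (n - 1) := by
  obtain ⟨m, rfl⟩ : ∃ m, n = m + 1 := ⟨n - 1, by omega⟩
  rw [jacobiP_eq_sum_range α (β - 1) (Nat.lt_succ_self _),
    jacobiP_eq_sum_range α β (Nat.lt_succ_self _), Nat.add_sub_cancel,
    jacobiP_eq_sum_range α β (N := m + 1 + 1) (by omega)]
  simp only [Finset.mul_sum, ← mul_assoc, ← C_mul, ← Finset.sum_add_distrib, ← add_mul,
    ← C_add]
  refine Finset.sum_congr rfl fun k _ => congrArg (C · * _) ?_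
  have hc : ((m : ℝ) + 1 + α) * ((ascPochhammer ℝ m).eval (α + 1) / m.factorial)
      = ((m : ℝ) + 1) * ((ascPochhammer ℝ (m + 1)).eval (α + 1) / (m + 1).factorial) := by
    rw [ascPochhammer_succ_eval, Nat.factorial_succ]; push_cast
    field_simp; ring
  have hb := ascPochhammer_eval_add_one_mul k (-((m : ℝ) + 1))
  have hq := ascPochhammer_eval_add_one_mul k ((m : ℝ) + 1 + α + β)
  rw [show -((m : ℝ) + 1) + 1 = -(m : ℝ) by ring] at hb
  push_cast
  rw [show (m : ℝ) + 1 + α + (β - 1) + 1 = (m : ℝ) + 1 + α + β by ring,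
    show (m : ℝ) + α + β + 1 = (m : ℝ) + 1 + α + β by ring]
  set D := (k.factorial : ℝ) * (ascPochhammer ℝ k).eval (α + 1)
  set c := (ascPochhammer ℝ (m + 1)).eval (α + 1) / ((m + 1).factorial : ℝ)
  set q := (ascPochhammer ℝ k).eval ((m : ℝ) + 1 + α + β)
  linear_combination (-(c * (ascPochhammer ℝ k).eval (-((m : ℝ) + 1)) / D)) * hq
    - ((ascPochhammer ℝ k).eval (-(m : ℝ)) * q / D) * hc + (c * q / D) * hb

theorem natDegree_jacobiP_le (α β : ℝ) (n : ℕ) : (jacobiP α β n).natDegree ≤ n := by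
  have hY : (C (1 / 2 : ℝ) * (1 - X)).natDegree ≤ 1 :=
    (natDegree_C_mul_le _ _).trans ((natDegree_sub_le _ _).trans (by simp))
  refine (natDegree_C_mul_le _ _).trans (natDegree_sum_le_of_forall_le _ _ fun k hk => ?_)
  calc _ ≤ k * (C (1 / 2 : ℝ) * (1 - X)).natDegree :=
        (natDegree_C_mul_le _ _).trans natDegree_pow_le
    _ ≤ n := by have := Finset.mem_range.mp hk; nlinarith

noncomputable def evenDerivSeries (N : ℕ) : ℝ[X] →ₗ[ℝ] ℝ[X] :=
  ∑ k ∈ Finset.range N, monomial k ∘ₗ leval 1 ∘ₗ derivative ^ (2 * k)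

theorem evenDerivSeries_apply (N : ℕ) (p : ℝ[X]) :
    evenDerivSeries N p =
      ∑ k ∈ Finset.range N, C ((derivative^[2 * k] p).eval 1) * X ^ k := by
  simp [evenDerivSeries, LinearMap.sum_apply, Module.End.pow_apply, C_mul_X_pow_eq_monomial]

theorem evenDerivSeries_eq_of_natDegree_lt {N M : ℕ} {p : ℝ[X]} (hNM : N ≤ M)
    (hp : p.natDegree < 2 * N) : evenDerivSeries N p = evenDerivSeries M p := by
  rw [evenDerivSeries_apply, evenDerivSeries_apply]
  refine Finset.sum_subset (Finset.range_subset_range.mpr hNM) fun k _ hk => ?_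
  rw [iterate_derivative_eq_zero (by simp at hk; omega), eval_zero, C_0, zero_mul]

theorem phi_eq_evenDerivSeries (α β : ℝ) {n N : ℕ} (hN : n / 2 < N) :
    phi α β n = evenDerivSeries N (jacobiP α β n) := by
  have hdeg : (jacobiP α β n).natDegree < 2 * (n / 2 + 1) :=
    (natDegree_jacobiP_le α β n).trans_lt (by omega)
  rw [← evenDerivSeries_eq_of_natDegree_lt hN hdeg, evenDerivSeries_apply, phi]

theorem phi_contiguous (α β : ℝ) {n : ℕ} (hn : n ≠ 0) :
    C (2 * (n : ℝ) + α + β) * phi α (β - 1) n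
      = C ((n : ℝ) + α + β) * phi α β n + C ((n : ℝ) + α) * phi α β (n - 1) := by
  have hN : n / 2 < n / 2 + 1 := Nat.lt_succ_self _
  rw [phi_eq_evenDerivSeries _ _ hN, phi_eq_evenDerivSeries _ _ hN,
    phi_eq_evenDerivSeries _ _ (N := n / 2 + 1) (by omega)]
  simp only [C_mul', ← map_smul, ← map_add]
  rw [← C_mul', ← C_mul', ← C_mul', jacobiP_contiguous α β hn]

theorem realRooted_C_mul_iff {a : ℝ} (ha : a ≠ 0) {p : ℝ[X]} :
    RealRooted (C a * p) ↔ RealRooted p := by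
  rw [RealRooted, RealRooted, roots_C_mul _ ha, natDegree_C_mul ha]

theorem shifted_real_rooted_of_phi_interlacing_general (α β : ℝ) (n : ℕ)
    (hnab : 0 < (n : ℝ) + α + β)
    (hpair : RealPair (phi α β n) (phi α β (n - 1))) :
    RealRooted (phi α (β - 1) n) := by
  rcases Nat.eq_zero_or_pos n with rfl | hn
  · simp [RealRooted, phi]
  have hc : 2 * (n : ℝ) + α + β ≠ 0 := by
    have : (0 : ℝ) < n := Nat.cast_pos.mpr hn
    exact (by linarith : (0 : ℝ) < _).ne'
  rw [← realRooted_C_mul_iff hc, phi_contiguous α β hn.ne']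
  exact hpair _ _

/-- Conversely: if the zeros of `φ_n^{(α,β)}` and `φ_{n−1}^{(α,β)}` are negative and
interlace non-strictly (they form a real pair), then `φ_n^{(α,β−1)}` has only real zeros. -/
theorem shifted_real_rooted_of_phi_interlacing (α β : ℝ) (n : ℕ) (hn : 4 ≤ n)
    (hα : -1 < α) (hnab : 0 < (n : ℝ) + α + β)
    (h1 : RealRooted (phi α β n)) (h2 : RealRooted (phi α β (n - 1)))
    (hneg1 : ∀ x ∈ (phi α β n).roots, x < 0)
    (hneg2 : ∀ x ∈ (phi α β (n - 1)).roots, x < 0)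
    (hpair : RealPair (phi α β n) (phi α β (n - 1))) :
    RealRooted (phi α (β - 1) n) :=
  shifted_real_rooted_of_phi_interlacing_general α β n hnab hpair
end
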